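/- Let (A,I) be a finite independence alphabet such that I ∪ Δ_A is transitive, with A₁, …, A_r the connected components of Γ(A,I), and let φ be an endomorphism of the trace monoid M(A,I) with φ(a) ≠ 1 for all a ∈ A. For u ∈ M(A,I), let u ξ̄ = {i ∈ {1,…,r} : some letter of A_i occurs in u}. Then for all u,v ∈ M(A,I), u ξ̄ = v ξ̄ implies φ(u) ξ̄ = φ(v) ξ̄. -/

import Mathlib

/-- The defining relation of the trace monoid: `ab = ba` whenever `(a,b) ∈ I`. -/
def traceRel (A : Type) (I : A → A → Prop) : FreeMonoid A → FreeMonoid A → Prop :=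
  fun x y => ∃ a b : A, I a b ∧ x = FreeMonoid.of a * FreeMonoid.of b ∧
    y = FreeMonoid.of b * FreeMonoid.of a

/-- The congruence on the free monoid generated by the trace relations. -/
def traceCon (A : Type) (I : A → A → Prop) : Con (FreeMonoid A) :=
  conGen (traceRel A I)

/-- The trace monoid `M(A,I)`, the quotient of the free monoid on `A` by the
congruence generated by `{(ab, ba) : (a,b) ∈ I}`. -/
abbrev TraceMonoid (A : Type) (I : A → A → Prop) := (traceCon A I).Quotient



/-- The image in the trace monoid of a letter `a ∈ A`. -/
def traceOf (A : Type) (I : A → A → Prop) (a : A) : TraceMonoid A I :=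
  (traceCon A I).mk' (FreeMonoid.of a)

/-- The set of letters which are periodic points of the endomorphism `φ`. -/
def perLetters (A : Type) (I : A → A → Prop) (φ : Monoid.End (TraceMonoid A I)) : Set A :=
  {a : A | ∃ n : ℕ, 1 ≤ n ∧ (φ ^ n) (traceOf A I a) = traceOf A I a}

/-- The independence graph `Γ(A,I)`: vertices `A`, with `a` and `b` adjacent iff they
are distinct and independent. (For symmetric `I`, `I a b ∧ I b a` is just `I a b`.) -/
def indepGraph (A : Type) (I : A → A → Prop) : SimpleGraph A where
  Adj a b := a ≠ b ∧ I a b ∧ I b a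
  symm := ⟨fun _ _ ⟨h1, h2, h3⟩ => ⟨h1.symm, h3, h2⟩⟩
  loopless := ⟨fun _ ⟨h, _⟩ => h rfl⟩

/-- The content of a trace: the set of letters occurring in (any representative of) it. -/
def content (A : Type) (I : A → A → Prop) (u : TraceMonoid A I) : Set A :=
  {a : A | ∃ w : FreeMonoid A, (traceCon A I).mk' w = u ∧ a ∈ FreeMonoid.toList w}

/-- `ξ̄(u)`: the set of connected components of `Γ(A,I)` meeting the content of `u`. -/
def xiBar (A : Type) (I : A → A → Prop) (u : TraceMonoid A I) :
    Set (indepGraph A I).ConnectedComponent :=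
  {c | ∃ a ∈ content A I u, (indepGraph A I).connectedComponentMk a = c}

/-!
Independent letters lie in one connected component of `Γ(A,I)`, so sending each letter to its
component induces a homomorphism from `M(A,I)` to the free monoid on the components, and `ξ̄(u)`
is the set of letters of the image of `u`. Nonempty commuting words of a free monoid have the same
letters, since `x ^ |y| = y ^ |x|`. Hence for independent `a, b` the nonempty commuting traces
`φ(a)` and `φ(b)` have the same `ξ̄`, and following paths in `Γ(A,I)`, so do `φ(a)` and `φ(b)` for
any two letters of one component. As `ξ̄(φ(u))` is the union of the `ξ̄(φ(a))` over the letters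
`a` of `u`, it only depends on `ξ̄(u)`.
-/

namespace FreeMonoid

variable {α : Type*}

theorem mem_pow {m : α} {x : FreeMonoid α} {n : ℕ} (hn : n ≠ 0) : m ∈ x ^ n ↔ m ∈ x := by
  obtain ⟨k, rfl⟩ := Nat.exists_eq_succ_of_ne_zero hn
  induction k with
  | zero => rw [pow_one]
  | succ k ih => rw [pow_succ, mem_mul, ih k.succ_ne_zero, or_self]

theorem length_pow (x : FreeMonoid α) (n : ℕ) : (x ^ n).length = n * x.length := by
  induction n with
  | zero => rw [pow_zero, length_one, Nat.zero_mul]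
  | succ n ih => rw [pow_succ, length_mul, ih, Nat.succ_mul]

/-- Both sides are prefixes of length `|x| * |y|` of `x ^ |y| * y ^ |x| = y ^ |x| * x ^ |y|`. -/
theorem pow_length_eq_pow_length_of_commute {x y : FreeMonoid α} (h : Commute x y) :
    x ^ y.length = y ^ x.length := by
  have hxy := congrArg toList (h.pow_pow y.length x.length).eq
  rw [toList_mul, toList_mul] at hxy
  refine toList.injective (List.append_inj hxy ?_).1
  change (x ^ _).length = (y ^ _).length
  rw [length_pow, length_pow, Nat.mul_comm]

theorem mem_iff_mem_of_commute {x y : FreeMonoid α} (h : Commute x y) (hx : x ≠ 1) (hy : y ≠ 1)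
    {m : α} : m ∈ x ↔ m ∈ y := by
  rw [← mem_pow (n := y.length) (mt length_eq_zero.1 hy),
    ← mem_pow (x := y) (n := x.length) (mt length_eq_zero.1 hx),
    pow_length_eq_pow_length_of_commute h]

end FreeMonoid

namespace TraceMonoid

variable {A B : Type} {I : A → A → Prop} {J : B → B → Prop}

theorem traceCon_le_ker {M : Type*} [Monoid M] (f : FreeMonoid A →* M)
    (hf : ∀ a b, I a b → Commute (f (.of a)) (f (.of b))) : traceCon A I ≤ Con.ker f := by
  refine Con.conGen_le.mpr ?_
  rintro _ _ ⟨a, b, hab, rfl, rfl⟩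
  rw [Con.ker_rel, map_mul, map_mul]
  exact (hf a b hab).eq

def lift {M : Type*} [Monoid M] (f : FreeMonoid A →* M)
    (hf : ∀ a b, I a b → Commute (f (.of a)) (f (.of b))) : TraceMonoid A I →* M :=
  (traceCon A I).lift f (traceCon_le_ker f hf)

theorem lift_mk' {M : Type*} [Monoid M] (f : FreeMonoid A →* M)
    (hf : ∀ a b, I a b → Commute (f (.of a)) (f (.of b))) (w : FreeMonoid A) :
    lift f hf ((traceCon A I).mk' w) = f w :=
  Con.lift_mk' _ _

theorem commute_traceOf {a b : A} (h : I a b) : Commute (traceOf A I a) (traceOf A I b) := by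
  rw [Commute, SemiconjBy, traceOf, traceOf, ← map_mul, ← map_mul]
  exact (traceCon A I).eq.mpr (ConGen.Rel.of _ _ ⟨a, b, h, rfl, rfl⟩)

@[elab_as_elim]
theorem induction_on {p : TraceMonoid A I → Prop} (u : TraceMonoid A I) (one : p 1)
    (traceOf_mul : ∀ a u, p u → p (traceOf A I a * u)) : p u := by
  obtain ⟨w, rfl⟩ := (traceCon A I).mk'_surjective u
  induction w using FreeMonoid.inductionOn' with
  | one => exact one
  | of_mul a w ih => rw [map_mul]; exact traceOf_mul a _ ih

theorem content_mk' (w : FreeMonoid A) : content A I ((traceCon A I).mk' w) = {a | a ∈ w} := by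
  classical
  ext a
  refine ⟨?_, fun ha => ⟨w, rfl, ha⟩⟩
  rintro ⟨w', hw', ha⟩
  have hcount : FreeMonoid.count a w' = FreeMonoid.count a w := by
    simpa only [lift_mk'] using
      congrArg (lift (I := I) (FreeMonoid.count a) fun _ _ _ => Commute.all _ _) hw'
  have hmem : ∀ v : FreeMonoid A, a ∈ v ↔ (FreeMonoid.count a v).toAdd ≠ 0 := fun v =>
    List.count_pos_iff.symm.trans Nat.pos_iff_ne_zero
  exact (hmem w).mpr (hcount ▸ (hmem w').mp ha)

theorem content_one : content A I 1 = ∅ :=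
  (content_mk' 1).trans (Set.eq_empty_of_forall_notMem fun _ => FreeMonoid.notMem_one)

theorem content_traceOf (a : A) : content A I (traceOf A I a) = {a} :=
  (content_mk' _).trans (Set.ext fun _ => FreeMonoid.mem_of)

theorem content_mul (u v : TraceMonoid A I) :
    content A I (u * v) = content A I u ∪ content A I v := by
  obtain ⟨w, rfl⟩ := (traceCon A I).mk'_surjective u
  obtain ⟨w', rfl⟩ := (traceCon A I).mk'_surjective v
  rw [← map_mul, content_mk', content_mk', content_mk']
  exact Set.ext fun _ => FreeMonoid.mem_mul

theorem content_map (ψ : TraceMonoid A I →* TraceMonoid B J) (u : TraceMonoid A I) :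
    content B J (ψ u) = ⋃ a ∈ content A I u, content B J (ψ (traceOf A I a)) := by
  induction u using induction_on with
  | one => rw [map_one, content_one, content_one, Set.biUnion_empty]
  | traceOf_mul a u ih =>
    rw [map_mul, content_mul, content_mul, ih, content_traceOf, Set.biUnion_union,
      Set.biUnion_singleton]

theorem connectedComponentMk_eq_of_rel (hsym : ∀ ⦃a b⦄, I a b → I b a) {a b : A} (h : I a b) :
    (indepGraph A I).connectedComponentMk a = (indepGraph A I).connectedComponentMk b := by
  by_cases hab : a = b
  · rw [hab]
  · exact SimpleGraph.ConnectedComponent.eq.mpr (SimpleGraph.Adj.reachable ⟨hab, h, hsym h⟩)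

def componentWord (hsym : ∀ ⦃a b⦄, I a b → I b a) :
    TraceMonoid A I →* FreeMonoid (indepGraph A I).ConnectedComponent :=
  lift (FreeMonoid.map (indepGraph A I).connectedComponentMk) fun _ _ hab => by
    rw [FreeMonoid.map_of, FreeMonoid.map_of, connectedComponentMk_eq_of_rel hsym hab]

theorem xiBar_eq_image (u : TraceMonoid A I) :
    xiBar A I u = (indepGraph A I).connectedComponentMk '' content A I u :=
  rfl

theorem xiBar_eq_setOf_mem_componentWord (hsym : ∀ ⦃a b⦄, I a b → I b a)
    (u : TraceMonoid A I) :
    xiBar A I u = {c | c ∈ componentWord hsym u} := by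
  obtain ⟨w, rfl⟩ := (traceCon A I).mk'_surjective u
  rw [xiBar_eq_image, content_mk', componentWord, lift_mk']
  exact Set.ext fun _ => FreeMonoid.mem_map.symm

theorem componentWord_ne_one (hsym : ∀ ⦃a b⦄, I a b → I b a) {u : TraceMonoid A I}
    (hu : u ≠ 1) :
    componentWord hsym u ≠ 1 := by
  obtain ⟨w, rfl⟩ := (traceCon A I).mk'_surjective u
  rw [componentWord, lift_mk']
  intro h
  have hw : w = 1 :=
    FreeMonoid.toList.injective (List.map_eq_nil_iff.mp (congrArg FreeMonoid.toList h))
  exact hu (by rw [hw, map_one])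

theorem xiBar_eq_of_commute (hsym : ∀ ⦃a b⦄, I a b → I b a) {u v : TraceMonoid A I}
    (hu : u ≠ 1) (hv : v ≠ 1) (h : Commute u v) : xiBar A I u = xiBar A I v := by
  rw [xiBar_eq_setOf_mem_componentWord hsym, xiBar_eq_setOf_mem_componentWord hsym]
  exact Set.ext fun _ => FreeMonoid.mem_iff_mem_of_commute (h.map _)
    (componentWord_ne_one hsym hu) (componentWord_ne_one hsym hv)

theorem xiBar_map (ψ : TraceMonoid A I →* TraceMonoid B J) (u : TraceMonoid A I) :
    xiBar B J (ψ u) = ⋃ a ∈ content A I u, xiBar B J (ψ (traceOf A I a)) := by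
  simp only [xiBar_eq_image, content_map ψ u, Set.image_iUnion₂]

theorem xiBar_map_traceOf_eq_of_reachable (hsym : ∀ ⦃a b⦄, J a b → J b a)
    (ψ : TraceMonoid A I →* TraceMonoid B J) (hne : ∀ a, ψ (traceOf A I a) ≠ 1) {a b : A}
    (h : (indepGraph A I).Reachable a b) :
    xiBar B J (ψ (traceOf A I a)) = xiBar B J (ψ (traceOf A I b)) := by
  rw [SimpleGraph.reachable_iff_reflTransGen] at h
  induction h with
  | refl => rfl
  | tail _ hbc ih =>
    exact ih.trans (xiBar_eq_of_commute hsym (hne _) (hne _) ((commute_traceOf hbc.2.1).map ψ))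

theorem xiBar_map_subset_of_xiBar_eq (hsym : ∀ ⦃a b⦄, J a b → J b a)
    (ψ : TraceMonoid A I →* TraceMonoid B J) (hne : ∀ a, ψ (traceOf A I a) ≠ 1)
    {u v : TraceMonoid A I} (huv : xiBar A I u = xiBar A I v) :
    xiBar B J (ψ u) ⊆ xiBar B J (ψ v) := by
  rw [xiBar_map, xiBar_map]
  refine Set.iUnion₂_subset fun a ha => ?_
  obtain ⟨b, hb, hba⟩ : (indepGraph A I).connectedComponentMk a ∈ xiBar A I v :=
    huv ▸ ⟨a, ha, rfl⟩
  rw [← xiBar_map_traceOf_eq_of_reachable hsym ψ hne (SimpleGraph.ConnectedComponent.exact hba)]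
  exact Set.subset_biUnion_of_mem (u := fun b => xiBar B J (ψ (traceOf A I b))) hb

end TraceMonoid

theorem xiBar_apply_eq_general (A : Type) (I : A → A → Prop)
    (hsym : Symmetric I)
    (φ : Monoid.End (TraceMonoid A I))
    (hne : ∀ a : A, φ (traceOf A I a) ≠ 1) :
    ∀ u v : TraceMonoid A I,
      xiBar A I u = xiBar A I v → xiBar A I (φ u) = xiBar A I (φ v) :=
  fun _ _ huv => (TraceMonoid.xiBar_map_subset_of_xiBar_eq hsym φ hne huv).antisymm
    (TraceMonoid.xiBar_map_subset_of_xiBar_eq hsym φ hne huv.symm)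

/-- Suppose `I ∪ Δ_A` is transitive and `φ` is an endomorphism of `M(A,I)` with
`φ(a) ≠ 1` for every letter `a`. If `u` and `v` meet the same connected components of
`Γ(A,I)`, then so do `φ(u)` and `φ(v)`. -/
theorem xiBar_apply_eq (A : Type) [Fintype A] (I : A → A → Prop)
    (hsym : Symmetric I) (hirr : Irreflexive I)
    (htrans : Transitive (fun a b : A => I a b ∨ a = b))
    (φ : Monoid.End (TraceMonoid A I))
    (hne : ∀ a : A, φ (traceOf A I a) ≠ 1) :
    ∀ u v : TraceMonoid A I,
      xiBar A I u = xiBar A I v → xiBar A I (φ u) = xiBar A I (φ v) :=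
  xiBar_apply_eq_general A I hsym φ hne
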